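/- arXiv:math/0612355 — 2 statements merged into one kernel-verified Lean document; each statement's English description precedes it below -/
import Mathlib

section
/- The ring O_{x₀}(K^T) of germs at x₀ of finitely presented analytic functions on K^T is a local ring whose unique maximal ideal is m_{x₀} = (x_t − x₀t : t ∈ T), the ideal generated by the germs of the coordinate functions x_t − x₀t; moreover a germ φ is non-invertible if and only if φ ∈ m_{x₀}. -/
/-! Evaluation at `x₀` is a ring map from `O_{x₀}(K^T)` onto the field `K`. A germ `g ∘ proj S`
with `g (proj S x₀) ≠ 0` is a unit, because `1 / g` is again analytic. A germ with
`g (proj S x₀) = 0` lies in `m_{x₀}` by the analytic Hadamard lemma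
`g y = ∑ t, (y t - c t) * h t y` (`c = proj S x₀`, `h t` analytic at `c`), which comes from
splitting off the constant term of the power series `p` of `g` at `c`: the remaining terms sum
to `p.shift.sum (y - c) (y - c)`, and `p.shift.sum` is analytic.
So `m_{x₀}` is the kernel of evaluation, is maximal, and consists exactly of the non-units. -/

open Filter Topology

variable {T : Type} {K : Type} [RCLike K]

/-- Projection onto coordinates in a finite set `S`. -/
def proj (K : Type) [RCLike K] (S : Finset T) : (T → K) → ({t // t ∈ S} → K) :=
  fun x i => x i.1

theorem proj_tendsto (S : Finset T) (x₀ : T → K) :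
    Tendsto (proj K S) (𝓝 x₀) (𝓝 (proj K S x₀)) :=
  (continuous_pi fun i => continuous_apply (i.1 : T)).tendsto x₀

/-- restriction map between finite coordinate spaces -/
def restr {S S' : Finset T} (h : S ⊆ S') : ({t // t ∈ S'} → K) →L[K] ({t // t ∈ S} → K) :=
  ContinuousLinearMap.pi fun i => ContinuousLinearMap.proj ⟨i.1, h i.2⟩

/-- A germ at `x₀` is a finitely presented analytic germ if it has a representative of the
form `g ∘ proj S` for a finite `S ⊆ T` and `g` analytic at `proj S x₀`. -/
def IsFP (x₀ : T → K) (φ : Germ (𝓝 x₀) K) : Prop :=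
  ∃ (S : Finset T) (g : ({t // t ∈ S} → K) → K),
    AnalyticAt K g (proj K S x₀) ∧ φ = Germ.ofFun (fun x => g (proj K S x))

/-- The ring `O_{x₀}(K^T)` of germs of finitely presented analytic functions. -/
def Ox (x₀ : T → K) : Subring (Germ (𝓝 x₀) K) where
  carrier := {φ | IsFP x₀ φ}
  one_mem' := ⟨∅, fun _ => 1, analyticAt_const, rfl⟩
  zero_mem' := ⟨∅, fun _ => 0, analyticAt_const, rfl⟩
  mul_mem' := by
    classical
    rintro a b ⟨S₁, g₁, hg₁, rfl⟩ ⟨S₂, g₂, hg₂, rfl⟩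
    have h1 : S₁ ⊆ S₁ ∪ S₂ := Finset.subset_union_left
    have h2 : S₂ ⊆ S₁ ∪ S₂ := Finset.subset_union_right
    have hg₁' : AnalyticAt K g₁ ((restr (K := K) h1) (proj K (S₁ ∪ S₂) x₀)) := hg₁
    have hg₂' : AnalyticAt K g₂ ((restr (K := K) h2) (proj K (S₁ ∪ S₂) x₀)) := hg₂
    have e1 : AnalyticAt K (g₁ ∘ restr (K := K) h1) (proj K (S₁ ∪ S₂) x₀) :=
      hg₁'.comp ((restr (K := K) h1).analyticAt (proj K (S₁ ∪ S₂) x₀))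
    have e2 : AnalyticAt K (g₂ ∘ restr (K := K) h2) (proj K (S₁ ∪ S₂) x₀) :=
      hg₂'.comp ((restr (K := K) h2).analyticAt (proj K (S₁ ∪ S₂) x₀))
    refine ⟨S₁ ∪ S₂, (g₁ ∘ restr h1) * (g₂ ∘ restr h2), e1.mul e2, ?_⟩
    rw [← Germ.coe_mul]; rfl
  add_mem' := by
    classical
    rintro a b ⟨S₁, g₁, hg₁, rfl⟩ ⟨S₂, g₂, hg₂, rfl⟩
    have h1 : S₁ ⊆ S₁ ∪ S₂ := Finset.subset_union_left
    have h2 : S₂ ⊆ S₁ ∪ S₂ := Finset.subset_union_right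
    have hg₁' : AnalyticAt K g₁ ((restr (K := K) h1) (proj K (S₁ ∪ S₂) x₀)) := hg₁
    have hg₂' : AnalyticAt K g₂ ((restr (K := K) h2) (proj K (S₁ ∪ S₂) x₀)) := hg₂
    have e1 : AnalyticAt K (g₁ ∘ restr (K := K) h1) (proj K (S₁ ∪ S₂) x₀) :=
      hg₁'.comp ((restr (K := K) h1).analyticAt (proj K (S₁ ∪ S₂) x₀))
    have e2 : AnalyticAt K (g₂ ∘ restr (K := K) h2) (proj K (S₁ ∪ S₂) x₀) :=
      hg₂'.comp ((restr (K := K) h2).analyticAt (proj K (S₁ ∪ S₂) x₀))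
    refine ⟨S₁ ∪ S₂, (g₁ ∘ restr h1) + (g₂ ∘ restr h2), e1.add e2, ?_⟩
    rw [← Germ.coe_add]; rfl
  neg_mem' := by
    rintro a ⟨S, g, hg, rfl⟩
    exact ⟨S, -g, hg.neg, by rw [← Germ.coe_neg]; rfl⟩

/-- The ideal `m_{x₀}` generated by the germs of the coordinate functions `x_t - x₀ t`. -/
def mIdeal (x₀ : T → K) : Ideal (Ox x₀) :=
  Ideal.span {φ : Ox x₀ | ∃ t : T, (φ : Germ (𝓝 x₀) K) = Germ.ofFun (fun x => x t - x₀ t)}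

section
variable {𝕜 E F : Type*} [NontriviallyNormedField 𝕜] [NormedAddCommGroup E] [NormedSpace 𝕜 E]
  [NormedAddCommGroup F] [NormedSpace 𝕜 F] [CompleteSpace F]
  {f : E → F} {p : FormalMultilinearSeries 𝕜 E F} {x : E} {r : ENNReal}

theorem HasFPowerSeriesOnBall.eq_add_shift_sum_apply (hf : HasFPowerSeriesOnBall f p x r)
    {y : E} (hy : y ∈ Metric.eball x r) :
    f y = f x + p.shift.sum (y - x) (y - x) := by
  have hshift : y - x ∈ Metric.eball (0 : E) p.shift.radius := by
    rw [p.radius_shift]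
    exact Metric.eball_subset_eball hf.r_le (by simpa [edist_eq_enorm_sub] using hy)
  have hterm : ∀ n, p.shift n (fun _ => y - x) (y - x) = p (n + 1) fun _ => y - x := fun n =>
    congrArg (p (n + 1)) (Fin.snoc_init_self fun _ => y - x)
  have htail : HasSum (fun n => p (n + 1) fun _ => y - x) (p.shift.sum (y - x) (y - x)) := by
    simpa only [ContinuousLinearMap.apply_apply, hterm] using
      (p.shift.hasSum hshift).mapL (ContinuousLinearMap.apply 𝕜 F (y - x))
  have hall := htail.zero_add (f := fun n => p n fun _ => y - x)
  rw [hf.coeff_zero] at hall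
  exact (hf.hasSum_sub hy).unique hall

theorem AnalyticAt.exists_eventually_eq_add_apply_sub (hf : AnalyticAt 𝕜 f x) :
    ∃ L : E → E →L[𝕜] F, AnalyticAt 𝕜 L x ∧ ∀ᶠ y in 𝓝 x, f y = f x + L y (y - x) := by
  obtain ⟨p, r, hp⟩ := hf
  have hL : AnalyticAt 𝕜 p.shift.sum 0 := by
    refine (p.shift.hasFPowerSeriesOnBall ?_).analyticAt
    rw [p.radius_shift]; exact hp.radius_pos
  refine ⟨fun y => p.shift.sum (y - x), hL.comp_of_eq (by fun_prop) (sub_self x), ?_⟩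
  filter_upwards [Metric.eball_mem_nhds x hp.r_pos] with y hy
  exact hp.eq_add_shift_sum_apply hy
end

theorem AnalyticAt.exists_eventually_eq_sum_sub_smul {𝕜 ι F : Type*} [NontriviallyNormedField 𝕜]
    [Fintype ι] [NormedAddCommGroup F] [NormedSpace 𝕜 F] [CompleteSpace F]
    {f : (ι → 𝕜) → F} {c : ι → 𝕜}
    (hf : AnalyticAt 𝕜 f c) (hc : f c = 0) :
    ∃ h : ι → (ι → 𝕜) → F, (∀ i, AnalyticAt 𝕜 (h i) c) ∧
      ∀ᶠ y in 𝓝 c, f y = ∑ i, (y i - c i) • h i y := by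
  classical
  obtain ⟨L, hL, hfL⟩ := hf.exists_eventually_eq_add_apply_sub
  refine ⟨fun i y => L y (Pi.single i 1), fun i => ?_, ?_⟩
  · exact (ContinuousLinearMap.apply 𝕜 F (Pi.single i 1)).analyticAt _ |>.comp hL
  · filter_upwards [hfL] with y hy
    rw [hy, hc, zero_add]
    conv_lhs => rw [pi_eq_sum_univ' (y - c), map_sum]
    simp only [map_smul, Pi.sub_apply]

section Germs

variable (x₀ : T → K)

def ev : Ox x₀ →+* K := Germ.valueRingHom.comp (Ox x₀).subtype

lemma ev_apply (φ : Ox x₀) : ev x₀ φ = (φ : Germ (𝓝 x₀) K).value := rfl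

lemma isUnit_of_ev_ne_zero {φ : Ox x₀} (hφ : ev x₀ φ ≠ 0) : IsUnit φ := by
  obtain ⟨S, g, hg, hrep⟩ := φ.2
  rw [ev_apply, hrep, Germ.value_ofFun] at hφ
  let ψ : Ox x₀ := ⟨Germ.ofFun fun x => (g (proj K S x))⁻¹, S, fun y => (g y)⁻¹, hg.inv hφ, rfl⟩
  have hne : ∀ᶠ x in 𝓝 x₀, g (proj K S x) ≠ 0 :=
    (hg.continuousAt.tendsto.comp (proj_tendsto S x₀)).eventually_ne hφ
  refine IsUnit.of_mul_eq_one (b := ψ) (Subtype.ext ?_)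
  change (φ : Germ (𝓝 x₀) K) * ψ = 1
  rw [hrep, ← Germ.coe_mul, ← Germ.coe_one, Germ.coe_eq]
  filter_upwards [hne] with x hx
  exact mul_inv_cancel₀ hx

lemma isUnit_iff_ev_ne_zero (φ : Ox x₀) : IsUnit φ ↔ ev x₀ φ ≠ 0 :=
  ⟨fun hφ => (hφ.map (ev x₀)).ne_zero, isUnit_of_ev_ne_zero x₀⟩

def coord (t : T) : Ox x₀ :=
  ⟨Germ.ofFun fun x => x t - x₀ t, {t}, fun y => y ⟨t, Finset.mem_singleton_self t⟩ - x₀ t,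
    (ContinuousLinearMap.proj (R := K) (φ := fun _ : {s // s ∈ ({t} : Finset T)} => K)
      ⟨t, Finset.mem_singleton_self t⟩).analyticAt _ |>.sub analyticAt_const, rfl⟩

lemma coord_mem_mIdeal (t : T) : coord x₀ t ∈ mIdeal x₀ :=
  Ideal.subset_span ⟨t, rfl⟩

lemma mIdeal_le_ker_ev : mIdeal x₀ ≤ RingHom.ker (ev x₀) := by
  rw [mIdeal, Ideal.span_le]
  rintro φ ⟨t, hφ⟩
  rw [SetLike.mem_coe, RingHom.mem_ker, ev_apply, hφ, Germ.value_ofFun, sub_self]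

lemma mem_mIdeal_of_ev_eq_zero {φ : Ox x₀} (hφ : ev x₀ φ = 0) : φ ∈ mIdeal x₀ := by
  obtain ⟨S, g, hg, hrep⟩ := φ.2
  rw [ev_apply, hrep, Germ.value_ofFun] at hφ
  obtain ⟨h, hh, hgh⟩ := hg.exists_eventually_eq_sum_sub_smul hφ
  let ψ : {t // t ∈ S} → Ox x₀ := fun t =>
    ⟨Germ.ofFun fun x => h t (proj K S x), S, h t, hh t, rfl⟩
  have hsum : φ = ∑ t, coord x₀ t.1 * ψ t := by
    refine Subtype.ext ?_
    rw [AddSubmonoidClass.coe_finsetSum]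
    change _ = ∑ t : {t // t ∈ S}, Germ.coeRingHom (𝓝 x₀) fun x => (x t - x₀ t) * h t (proj K S x)
    rw [← map_sum, hrep, Germ.coe_coeRingHom, Germ.coe_eq]
    filter_upwards [(proj_tendsto S x₀).eventually hgh] with x hx
    rw [Finset.sum_apply]
    exact hx
  rw [hsum]
  exact Ideal.sum_mem _ fun t _ => Ideal.mul_mem_right _ _ (coord_mem_mIdeal x₀ t.1)

lemma mIdeal_eq_ker_ev : mIdeal x₀ = RingHom.ker (ev x₀) :=
  le_antisymm (mIdeal_le_ker_ev x₀) fun _ hφ => mem_mIdeal_of_ev_eq_zero x₀ (RingHom.mem_ker.mp hφ)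

lemma ev_surjective : Function.Surjective (ev x₀) := fun k =>
  ⟨⟨Germ.ofFun fun _ => k, ∅, fun _ => k, analyticAt_const, rfl⟩, rfl⟩

end Germs

theorem stmt_8_general (x₀ : T → K) :
    (∀ φ : Ox x₀, ¬ IsUnit φ ↔ φ ∈ mIdeal x₀) ∧
    (mIdeal x₀).IsMaximal ∧
    ∀ J : Ideal (Ox x₀), J.IsMaximal → J = mIdeal x₀ := by
  have hnonunit (φ : Ox x₀) : ¬ IsUnit φ ↔ φ ∈ mIdeal x₀ := by
    rw [isUnit_iff_ev_ne_zero, not_not, mIdeal_eq_ker_ev, RingHom.mem_ker]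
  have hmax : (mIdeal x₀).IsMaximal := by
    rw [mIdeal_eq_ker_ev]
    exact RingHom.ker_isMaximal_of_surjective _ (ev_surjective x₀)
  refine ⟨hnonunit, hmax, fun J hJ => hJ.eq_of_le hmax.ne_top fun φ hφ => ?_⟩
  exact (hnonunit φ).mp fun hu => hJ.ne_top (J.eq_top_of_isUnit_mem hφ hu)

/-- `O_{x₀}(K^T)` is a local ring with unique maximal ideal `m_{x₀} = (x_t - x₀ t : t ∈ T)`;
a germ is non-invertible iff it lies in `m_{x₀}`. -/
theorem stmt_8 [Infinite T] (x₀ : T → K) :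
    (∀ φ : Ox x₀, ¬ IsUnit φ ↔ φ ∈ mIdeal x₀) ∧
    (mIdeal x₀).IsMaximal ∧
    ∀ J : Ideal (Ox x₀), J.IsMaximal → J = mIdeal x₀ :=
  stmt_8_general x₀
end

section
/- Let α, β be finite subsets of O_{x₀}(K^T). If the zero set-germ Z(α) is contained in Z(β), then there exists a finite set S ⊆ T such that Z((M^T_S)⁻¹(α)) ⊆ Z((M^T_S)⁻¹(β)) as germs at x₀|_S in K^S. -/
open Filter Topology

variable {T : Type} {K : Type} [RCLike K]

/-- If `α`, `β` are finite subsets of `O_{x₀}(K^T)` (given by representatives `f i`, `h j`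
which are finitely presented analytic) and the zero set-germ of `α` is contained in that of
`β`, then there is a finite nonempty `S ⊆ T` such that, for analytic representing functions
on `K^S`, `Z((M^T_S)⁻¹(α)) ⊆ Z((M^T_S)⁻¹(β))` as germs at `x₀|_S`. -/
theorem stmt_12 [Infinite T] (x₀ : T → K) (k l : ℕ)
    (f : Fin k → ((T → K) → K)) (h : Fin l → ((T → K) → K))
    (hf : ∀ i, IsFP x₀ (Germ.ofFun (f i))) (hh : ∀ j, IsFP x₀ (Germ.ofFun (h j)))
    (hZ : ∀ᶠ x in 𝓝 x₀, (∀ i, f i x = 0) → ∀ j, h j x = 0) :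
    ∃ S : Finset T, S.Nonempty ∧
      ∃ (g : Fin k → (({t // t ∈ S} → K) → K)) (e : Fin l → (({t // t ∈ S} → K) → K)),
        (∀ i, AnalyticAt K (g i) (proj K S x₀) ∧
          (Germ.ofFun (f i) : Germ (𝓝 x₀) K) = Germ.ofFun (fun x => g i (proj K S x))) ∧
        (∀ j, AnalyticAt K (e j) (proj K S x₀) ∧
          (Germ.ofFun (h j) : Germ (𝓝 x₀) K) = Germ.ofFun (fun x => e j (proj K S x))) ∧
        ∀ᶠ y in 𝓝 (proj K S x₀), (∀ i, g i y = 0) → ∀ j, e j y = 0 := by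

  classical
  choose Sf gf hgf hef using hf
  choose Sh gh hgh heh using hh
  have hef' : ∀ i, ∀ᶠ x in 𝓝 x₀, f i x = gf i (proj K (Sf i) x) := fun i =>
    Filter.Germ.coe_eq.mp (hef i)
  have heh' : ∀ j, ∀ᶠ x in 𝓝 x₀, h j x = gh j (proj K (Sh j) x) := fun j =>
    Filter.Germ.coe_eq.mp (heh j)
  have hbig : ∀ᶠ x in 𝓝 x₀,
      ((∀ i, f i x = 0) → ∀ j, h j x = 0) ∧
      (∀ i, f i x = gf i (proj K (Sf i) x)) ∧
      (∀ j, h j x = gh j (proj K (Sh j) x)) := by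
    refine hZ.and (((eventually_all).mpr hef').and ((eventually_all).mpr heh'))
  obtain ⟨V, hV, hVprop⟩ := hbig.exists_mem
  rw [nhds_pi, Filter.mem_pi] at hV
  obtain ⟨I, hIfin, U, hU, hIU⟩ := hV
  have : Nonempty T := inferInstance
  set t₀ : T := Classical.arbitrary T with ht₀
  set S : Finset T :=
    insert t₀ (hIfin.toFinset ∪ Finset.univ.biUnion Sf ∪ Finset.univ.biUnion Sh) with hS
  have hSf : ∀ i, Sf i ⊆ S := by
    intro i t ht
    simp only [hS, Finset.mem_insert, Finset.mem_union, Finset.mem_biUnion]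
    exact Or.inr (Or.inl (Or.inr ⟨i, Finset.mem_univ i, ht⟩))
  have hSh : ∀ j, Sh j ⊆ S := by
    intro j t ht
    simp only [hS, Finset.mem_insert, Finset.mem_union, Finset.mem_biUnion]
    exact Or.inr (Or.inr ⟨j, Finset.mem_univ j, ht⟩)
  have hIS : ∀ t ∈ I, t ∈ S := by
    intro t ht
    simp only [hS, Finset.mem_insert, Finset.mem_union, Set.Finite.mem_toFinset]
    exact Or.inr (Or.inl (Or.inl ht))
  refine ⟨S, ⟨t₀, Finset.mem_insert_self _ _⟩,
    fun i => gf i ∘ restr (hSf i), fun j => gh j ∘ restr (hSh j), ?_, ?_, ?_⟩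
  · intro i
    have hpt : restr (K := K) (hSf i) (proj K S x₀) = proj K (Sf i) x₀ := by
      funext t; rfl
    constructor
    · have h1 : AnalyticAt K (gf i) ((restr (K := K) (hSf i)) (proj K S x₀)) := by
        rw [hpt]; exact hgf i
      exact h1.comp ((restr (K := K) (hSf i)).analyticAt (proj K S x₀))
    · refine (hef i).trans (Filter.Germ.coe_eq.mpr (Filter.Eventually.of_forall fun x => ?_))
      rfl
  · intro j
    have hpt : restr (K := K) (hSh j) (proj K S x₀) = proj K (Sh j) x₀ := by
      funext t; rfl
    constructor
    · have h1 : AnalyticAt K (gh j) ((restr (K := K) (hSh j)) (proj K S x₀)) := by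
        rw [hpt]; exact hgh j
      exact h1.comp ((restr (K := K) (hSh j)).analyticAt (proj K S x₀))
    · refine (heh j).trans (Filter.Germ.coe_eq.mpr (Filter.Eventually.of_forall fun x => ?_))
      rfl
  · have hmem : ∀ᶠ y in 𝓝 (proj K S x₀), ∀ t ∈ I, ∀ ht : t ∈ I, y ⟨t, hIS t ht⟩ ∈ U t := by
      rw [Filter.eventually_all_finite hIfin]
      intro t ht
      have htend : Tendsto (fun y : {t // t ∈ S} → K => y ⟨t, hIS t ht⟩) (𝓝 (proj K S x₀))
          (𝓝 (x₀ t)) := (continuous_apply _).tendsto _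
      filter_upwards [htend.eventually_mem (hU t)] with y hy ht'
      exact hy
    filter_upwards [hmem] with y hy hg0 j
    set x : T → K := fun t => if ht : t ∈ S then y ⟨t, ht⟩ else x₀ t with hx
    have hproj : ∀ (F : Finset T) (hF : F ⊆ S), proj K F x = restr (K := K) hF y := by
      intro F hF; funext t
      show x t.1 = y ⟨t.1, hF t.2⟩
      rw [hx]; simp [dif_pos (hF t.2)]
    have hxV : x ∈ V := by
      apply hIU
      intro t ht
      have := hy t ht ht
      simpa [hx, dif_pos (hIS t ht)] using this
    obtain ⟨himp, hfx, hhx⟩ := hVprop x hxV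
    have hhj := himp (fun i => by
      rw [hfx i, hproj (Sf i) (hSf i)]; exact hg0 i) j
    rw [hhx j, hproj (Sh j) (hSh j)] at hhj
    exact hhj
end
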